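/- arXiv:2602.09283 — 2 statements merged into one kernel-verified Lean document; each statement's English description precedes it below -/
import Mathlib

section
/- Let X and Y be extremally disconnected compact Hausdorff spaces and let f : X → Y be a continuous quasi-open map. Then f is an open map. -/
/-!
Quasi-openness forces the image of an open set `U` to lie in the closure of its own interior:
otherwise the part of `U` mapped outside that closure would be a nonempty open set whose image
has interior points, and these lie both in `interior (f '' U)` and outside its closure. The image
of a compact open set is moreover closed, so it is a regular closed set, hence open in the
extremally disconnected `Y`. Clopen sets form a basis of the Stone space `X`, so `f` is open.
-/

open Set TopologicalSpace

section

variable {X Y : Type*} [TopologicalSpace X] [TopologicalSpace Y]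

def IsQuasiOpenMap (f : X → Y) : Prop :=
  ∀ U : Set X, IsOpen U → U.Nonempty → (interior (f '' U)).Nonempty

namespace IsQuasiOpenMap

theorem image_subset_closure_interior_image {f : X → Y} (hqo : IsQuasiOpenMap f)
    (hf : Continuous f) {U : Set X} (hU : IsOpen U) :
    f '' U ⊆ closure (interior (f '' U)) := by
  rintro _ ⟨x, hxU, rfl⟩
  by_contra hx
  set W := U ∩ f ⁻¹' (closure (interior (f '' U)))ᶜ
  have hW : IsOpen W := hU.inter (isClosed_closure.isOpen_compl.preimage hf)
  obtain ⟨y, hy⟩ := hqo W hW ⟨x, hxU, hx⟩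
  have hy_int : y ∈ interior (f '' U) := interior_mono (image_mono inter_subset_left) hy
  obtain ⟨w, hw, rfl⟩ := interior_subset hy
  exact hw.2 (subset_closure hy_int)

theorem isOpen_image_of_isCompact_of_isOpen [T2Space Y] [ExtremallyDisconnected Y] {f : X → Y}
    (hqo : IsQuasiOpenMap f) (hf : Continuous f) {K : Set X} (hKc : IsCompact K)
    (hKo : IsOpen K) : IsOpen (f '' K) := by
  have h_eq : f '' K = closure (interior (f '' K)) :=
    (hqo.image_subset_closure_interior_image hf hKo).antisymm
      (closure_minimal interior_subset (hKc.image hf).isClosed)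
  rw [h_eq]
  exact ExtremallyDisconnected.open_closure _ isOpen_interior

end IsQuasiOpenMap

end

theorem isOpenMap_of_quasiOpen_general
    {X Y : Type*} [TopologicalSpace X] [CompactSpace X] [T2Space X]
    [ExtremallyDisconnected X] [TopologicalSpace Y] [T2Space Y]
    [ExtremallyDisconnected Y] (f : X → Y) (hf : Continuous f)
    (hqo : ∀ U : Set X, IsOpen U → U.Nonempty → (interior (f '' U)).Nonempty) :
    IsOpenMap f :=
  isTopologicalBasis_isClopen.isOpenMap_iff.2 fun _ hK =>
    IsQuasiOpenMap.isOpen_image_of_isCompact_of_isOpen hqo hf hK.isClosed.isCompact hK.isOpen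

/-- A continuous quasi-open map between extremally disconnected compact Hausdorff
spaces is open. -/
theorem isOpenMap_of_quasiOpen
    {X Y : Type*} [TopologicalSpace X] [CompactSpace X] [T2Space X]
    [ExtremallyDisconnected X] [TopologicalSpace Y] [CompactSpace Y] [T2Space Y]
    [ExtremallyDisconnected Y] (f : X → Y) (hf : Continuous f)
    (hqo : ∀ U : Set X, IsOpen U → U.Nonempty → (interior (f '' U)).Nonempty) :
    IsOpenMap f :=
  isOpenMap_of_quasiOpen_general f hf hqo
end

section
/- Let X and Y be compact Hausdorff spaces, f : X → Y a continuous quasi-open map, A an index type, and (U α)_{α ∈ A} a family of open subsets of Y. Then closure (f⁻¹ (⋃ α, U α)) = closure (f⁻¹ (interior (closure (⋃ α, U α)))). -/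
/-!
One inclusion is `S ⊆ interior (closure S)` for open `S`. For the other, if `f x ∈ interior (closure S)`
and `o` is a neighbourhood of `x`, then by quasi-openness the image of `o ∩ f ⁻¹' interior (closure S)`
contains a nonempty open subset of `closure S`, which must meet `S`; so `o` meets `f ⁻¹' S`.
-/

open Set

def IsQuasiOpen {X Y : Type*} [TopologicalSpace X] [TopologicalSpace Y] (f : X → Y) : Prop :=
  ∀ U : Set X, IsOpen U → U.Nonempty → (interior (f '' U)).Nonempty

namespace IsQuasiOpen

variable {X Y : Type*} [TopologicalSpace X] [TopologicalSpace Y] {f : X → Y}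

theorem inter_preimage_nonempty_of_image_subset_closure (hf : IsQuasiOpen f) {W : Set X}
    (hW : IsOpen W) (hWne : W.Nonempty) {S : Set Y} (hWS : f '' W ⊆ closure S) :
    (W ∩ f ⁻¹' S).Nonempty := by
  have hmeet : (closure S ∩ interior (f '' W)).Nonempty := by
    obtain ⟨y, hy⟩ := hf W hW hWne
    exact ⟨y, hWS (interior_subset hy), hy⟩
  obtain ⟨y, hyS, hyW⟩ := (closure_inter_open_nonempty_iff isOpen_interior).mp hmeet
  obtain ⟨x, hxW, rfl⟩ := interior_subset hyW
  exact ⟨x, hxW, hyS⟩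

theorem preimage_interior_closure_subset (hf : IsQuasiOpen f) (hcont : Continuous f)
    (S : Set Y) : f ⁻¹' interior (closure S) ⊆ closure (f ⁻¹' S) := by
  intro x hx
  refine mem_closure_iff.mpr fun o ho hxo => ?_
  have hW : IsOpen (o ∩ f ⁻¹' interior (closure S)) := ho.inter (isOpen_interior.preimage hcont)
  have hWS : f '' (o ∩ f ⁻¹' interior (closure S)) ⊆ closure S :=
    (image_mono inter_subset_right).trans ((image_preimage_subset _ _).trans interior_subset)
  obtain ⟨z, ⟨hzo, -⟩, hzS⟩ :=
    hf.inter_preimage_nonempty_of_image_subset_closure hW ⟨x, hxo, hx⟩ hWS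
  exact ⟨z, hzo, hzS⟩

theorem closure_preimage_interior_closure (hf : IsQuasiOpen f) (hcont : Continuous f)
    {S : Set Y} (hS : IsOpen S) :
    closure (f ⁻¹' interior (closure S)) = closure (f ⁻¹' S) :=
  subset_antisymm (closure_minimal (hf.preimage_interior_closure_subset hcont S) isClosed_closure)
    (closure_mono (preimage_mono hS.subset_interior_closure))

end IsQuasiOpen

theorem quasiOpen_closure_preimage_iUnion_general
    {X Y : Type*} [TopologicalSpace X]
    [TopologicalSpace Y]
    (f : X → Y) (hf : Continuous f)
    (hqo : ∀ U : Set X, IsOpen U → U.Nonempty → (interior (f '' U)).Nonempty)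
    {A : Type*} (U : A → Set Y) (hU : ∀ α, IsOpen (U α)) :
    closure (f ⁻¹' ⋃ α, U α) =
      closure (f ⁻¹' interior (closure (⋃ α, U α))) :=
  (IsQuasiOpen.closure_preimage_interior_closure (f := f) hqo hf (isOpen_iUnion hU)).symm

/-- For a continuous quasi-open map between compact Hausdorff spaces and a family
of open sets in the codomain, the closure of the preimage of the union equals the
closure of the preimage of the regularization of the union. -/
theorem quasiOpen_closure_preimage_iUnion
    {X Y : Type*} [TopologicalSpace X] [CompactSpace X] [T2Space X]
    [TopologicalSpace Y] [CompactSpace Y] [T2Space Y]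
    (f : X → Y) (hf : Continuous f)
    (hqo : ∀ U : Set X, IsOpen U → U.Nonempty → (interior (f '' U)).Nonempty)
    {A : Type*} (U : A → Set Y) (hU : ∀ α, IsOpen (U α)) :
    closure (f ⁻¹' ⋃ α, U α) =
      closure (f ⁻¹' interior (closure (⋃ α, U α))) :=
  quasiOpen_closure_preimage_iUnion_general f hf hqo U hU
end
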